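/- For all integers i, j ≥ 3 there exists an integer W(i,j) such that for all x ∈ F_i and y ∈ F_j, the sum x + y mod 1 lies in F_{W(i,j)}. In particular, the Erdős set E = ⋃_{i≥3} F_i is closed under addition modulo 1. -/

import Mathlib

open Filter MeasureTheory Set

/-- The `n`-th binary digit of `x ∈ [0,1)` (dyadic rationals get the
terminating expansion, i.e. the one with finitely many `1`'s). -/
noncomputable def digit (x : ℝ) (n : ℕ) : ℕ := (⌊x * 2 ^ n⌋).toNat % 2

/-- Positions of digit `1` in the binary expansion of `x`. -/
def onesOf (x : ℝ) : Set ℕ := {n : ℕ | digit x n = 1}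

/-- `A` contains an `m`-term arithmetic progression. -/
def HasAP (A : Set ℕ) (m : ℕ) : Prop :=
  ∃ a d : ℕ, 1 ≤ d ∧ ∀ t < m, a + t * d ∈ A

/-- `F i`: numbers in `[0,1)` whose binary expansion contains no `i`-term
arithmetic progression of positions of digit `1`. -/
noncomputable def F (i : ℕ) : Set ℝ :=
  {x ∈ Set.Ico (0 : ℝ) 1 | ¬ HasAP (onesOf x) i}

/-- The Erdős set. -/
noncomputable def E : Set ℝ := ⋃ i, ⋃ (_ : 3 ≤ i), F i

/-!
If `z = x + y mod 1` has a `1` at position `n` of its binary expansion, then one of `x`, `y` has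
a `1` at position `n` or `n + 1` (the latter producing the carry). Hence `onesOf z` is covered by
`onesOf x`, `onesOf y` and their shifts by one, and a long arithmetic progression in `onesOf z`
yields, by the finitary van der Waerden theorem applied to this 4-colouring, a progression of
length `max i j` in `onesOf x` or `onesOf y`.
-/

open Finset in
theorem Combinatorics.Line.sum_val_apply {m : ℕ} {ι : Type*} [Fintype ι]
    (l : Line (Fin m) ι) (x : Fin m) :
    ∑ i, (l x i : ℕ) = ∑ i, ((l.idxFun i).map Fin.val).getD 0 + x * #{i | l.idxFun i = none} := by
  rw [card_eq_sum_ones, sum_filter, mul_sum, ← sum_add_distrib]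
  refine sum_congr rfl fun i _ => ?_
  rcases h : l.idxFun i <;> simp [h]

open Finset in
theorem exists_mono_ap_below (m : ℕ) (κ : Type*) [Finite κ] :
    ∃ N, ∀ C : ℕ → κ, ∃ a d c, 1 ≤ d ∧ ∀ t < m, a + t * d < N ∧ C (a + t * d) = c := by
  obtain ⟨ι, _, hι⟩ := Combinatorics.Line.exists_mono_in_high_dimension (Fin m) κ
  refine ⟨Fintype.card ι * m + 1, fun C => ?_⟩
  obtain ⟨l, c, hl⟩ := hι fun v => C (∑ i, (v i : ℕ))
  refine ⟨∑ i, ((l.idxFun i).map Fin.val).getD 0, #{i | l.idxFun i = none}, c,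
    card_pos.mpr ⟨l.proper.choose, by simpa using l.proper.choose_spec⟩, fun t ht => ?_⟩
  rw [← l.sum_val_apply ⟨t, ht⟩]
  refine ⟨Nat.lt_succ_of_le ?_, hl _⟩
  calc ∑ i, (l ⟨t, ht⟩ i : ℕ) ≤ ∑ _i : ι, m := sum_le_sum fun i _ => (Fin.is_lt _).le
    _ = Fintype.card ι * m := by simp

theorem HasAP.of_le {A : Set ℕ} {m n : ℕ} (h : HasAP A n) (hmn : m ≤ n) : HasAP A m :=
  let ⟨a, d, hd, hA⟩ := h
  ⟨a, d, hd, fun t ht => hA t (ht.trans_le hmn)⟩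

theorem HasAP.of_preimage_add {A : Set ℕ} {m c : ℕ} (h : HasAP ((· + c) ⁻¹' A) m) : HasAP A m :=
  let ⟨a, d, hd, hA⟩ := h
  ⟨a + c, d, hd, fun t ht => by simpa [add_right_comm] using hA t ht⟩

theorem exists_hasAP_of_subset_iUnion (m : ℕ) (ι : Type*) [Finite ι] :
    ∃ W, ∀ (A : Set ℕ) (B : ι → Set ℕ), A ⊆ ⋃ r, B r → HasAP A W → ∃ r, HasAP (B r) m := by
  obtain ⟨N, hN⟩ := exists_mono_ap_below m ι
  refine ⟨N + 1, fun A B hAB ⟨a, d, hd, hA⟩ => ?_⟩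
  have hcover (t : ℕ) (ht : t < N + 1) : ∃ r, a + t * d ∈ B r := mem_iUnion.mp (hAB (hA t ht))
  obtain ⟨r₀, -⟩ := hcover 0 N.succ_pos
  obtain ⟨b, e, c, he, hbe⟩ :=
    hN fun t => if ht : t < N + 1 then (hcover t ht).choose else r₀
  refine ⟨c, a + b * d, e * d, Nat.mul_pos he hd, fun t ht => ?_⟩
  obtain ⟨hlt, hc⟩ := hbe t ht
  have hlt' : b + t * e < N + 1 := by omega
  rw [dif_pos hlt'] at hc
  have hmem := (hcover _ hlt').choose_spec
  rw [hc] at hmem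
  convert hmem using 1
  ring

theorem digit_eq_one_iff {x : ℝ} (hx : 0 ≤ x) (n : ℕ) :
    digit x n = 1 ↔ ⌊x * 2 ^ n⌋ % 2 = 1 := by
  have : 0 ≤ ⌊x * 2 ^ n⌋ := Int.floor_nonneg.mpr (by positivity)
  unfold digit
  omega

theorem digit_eq_one_iff_floor_succ {x : ℝ} (hx : 0 ≤ x) (n : ℕ) :
    digit x n = 1 ↔ ⌊x * 2 ^ (n + 1)⌋ / 2 % 2 = 1 := by
  have : x * 2 ^ n = x * 2 ^ (n + 1) / (2 : ℕ) := by push_cast; ring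
  rw [digit_eq_one_iff hx, this, Int.floor_div_natCast]
  rfl

theorem digit_fract_zero (w : ℝ) : digit (Int.fract w) 0 = 0 := by
  simp [digit]

theorem digit_fract_add_eq_one {x y : ℝ} (hx : 0 ≤ x) (hy : 0 ≤ y) {n : ℕ}
    (h : digit (Int.fract (x + y)) n = 1) :
    digit x n = 1 ∨ digit y n = 1 ∨ digit x (n + 1) = 1 ∨ digit y (n + 1) = 1 := by
  obtain _ | n := n
  · simp [digit_fract_zero] at h
  -- With `X`, `Y`, `Z` the floors of `x`, `y`, `fract (x + y)` times `2 ^ (n + 2)`, we have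
  -- `Z ≡ X + Y + c (mod 4)` for a carry `c ∈ {0, 1}`; bit 1 of the right side can only be set
  -- if bit 1 or bit 0 of `X` or `Y` is.
  rw [digit_eq_one_iff_floor_succ (Int.fract_nonneg _)] at h
  rw [digit_eq_one_iff_floor_succ hx, digit_eq_one_iff_floor_succ hy, digit_eq_one_iff hx,
    digit_eq_one_iff hy]
  have hz : ⌊Int.fract (x + y) * 2 ^ (n + 1 + 1)⌋
      = ⌊x * 2 ^ (n + 1 + 1) + y * 2 ^ (n + 1 + 1)⌋ - 4 * (⌊x + y⌋ * 2 ^ n) := by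
    rw [← Int.floor_sub_intCast]; congr 1; rw [Int.fract]; push_cast; ring
  have := Int.le_floor_add (x * 2 ^ (n + 1 + 1)) (y * 2 ^ (n + 1 + 1))
  have := Int.le_floor_add_floor (x * 2 ^ (n + 1 + 1)) (y * 2 ^ (n + 1 + 1))
  omega

theorem exists_hasAP_onesOf_fract_add (m : ℕ) :
    ∃ W, ∀ x y : ℝ, 0 ≤ x → 0 ≤ y → HasAP (onesOf (Int.fract (x + y))) W →
      HasAP (onesOf x) m ∨ HasAP (onesOf y) m := by
  obtain ⟨W, hW⟩ := exists_hasAP_of_subset_iUnion m (Fin 4)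
  refine ⟨W, fun x y hx hy hz => ?_⟩
  set B := ![onesOf x, onesOf y, (· + 1) ⁻¹' onesOf x, (· + 1) ⁻¹' onesOf y]
  have hcover : onesOf (Int.fract (x + y)) ⊆ ⋃ r, B r := fun n hn => by
    simpa [B, Fin.exists_fin_succ, onesOf] using digit_fract_add_eq_one hx hy hn
  obtain ⟨r, hr⟩ := hW _ B hcover hz
  fin_cases r
  · exact .inl hr
  · exact .inr hr
  · exact .inl hr.of_preimage_add
  · exact .inr hr.of_preimage_add

theorem F_mono : Monotone F :=
  fun _ _ hij _ ⟨hx, hAP⟩ => ⟨hx, fun h => hAP (h.of_le hij)⟩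

theorem exists_fract_add_mem_F (i j : ℕ) :
    ∃ W, ∀ x ∈ F i, ∀ y ∈ F j, Int.fract (x + y) ∈ F W := by
  obtain ⟨W, hW⟩ := exists_hasAP_onesOf_fract_add (max i j)
  refine ⟨W, fun x hx y hy => ⟨⟨Int.fract_nonneg _, Int.fract_lt_one _⟩, fun hz => ?_⟩⟩
  rcases hW x y hx.1.1 hy.1.1 hz with h | h
  · exact hx.2 (h.of_le (le_max_left _ _))
  · exact hy.2 (h.of_le (le_max_right _ _))

theorem stmt6 :
    (∀ i j : ℕ, 3 ≤ i → 3 ≤ j → ∃ W : ℕ,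
      ∀ x ∈ F i, ∀ y ∈ F j, Int.fract (x + y) ∈ F W) ∧
    (∀ x ∈ E, ∀ y ∈ E, Int.fract (x + y) ∈ E) := by
  refine ⟨fun i j _ _ => exists_fract_add_mem_F i j, fun x hx y hy => ?_⟩
  simp only [E, mem_iUnion] at hx hy ⊢
  obtain ⟨i, -, hx⟩ := hx
  obtain ⟨j, -, hy⟩ := hy
  obtain ⟨W, hW⟩ := exists_fract_add_mem_F i j
  exact ⟨max W 3, le_max_right _ _, F_mono (le_max_left _ _) (hW x hx y hy)⟩
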